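/- arXiv:1408.2967 — 2 statements merged into one kernel-verified Lean document; each statement's English description precedes it below -/
import Mathlib

section
/- Let n be a positive integer and let A be a real-linear map from the real vector space of Hermitian n×n complex matrices to itself. Then ⟨A(X), Y⟩ = 0 holds for all positive semidefinite matrices X, Y with ⟨X, Y⟩ = 0 if and only if v* A(u u*) v = 0 for all u, v ∈ ℂⁿ with v* u = 0. -/
open Matrix
open scoped ComplexOrder

/-! Both `X` and `Y` are sums of rank-one matrices `x xᴴ`, `y yᴴ`, and
`Tr(x xᴴ y yᴴ) = |yᴴ x|²`. Hence `Tr(X Y) = 0` forces every `x` to be orthogonal to every `y`,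
and `Tr(A(X) Y)` splits into the sum of the terms `yᴴ A(x xᴴ) y`, all of which vanish. -/

namespace Matrix

variable {𝕜 n : Type*} [RCLike 𝕜] [Fintype n]

theorem trace_mul_vecMulVec_self_star (M : Matrix n n 𝕜) (v : n → 𝕜) :
    (M * vecMulVec v (star v)).trace = star v ⬝ᵥ (M *ᵥ v) := by
  rw [mul_vecMulVec, trace_vecMulVec, dotProduct_comm]

theorem trace_mul_sum_vecMulVec_self_star {ι : Type*} [Fintype ι] (M : Matrix n n 𝕜)
    (y : ι → n → 𝕜) :
    (M * ∑ j, vecMulVec (y j) (star (y j))).trace = ∑ j, star (y j) ⬝ᵥ (M *ᵥ y j) := by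
  simp only [Finset.mul_sum, trace_sum, trace_mul_vecMulVec_self_star]

theorem star_dotProduct_vecMulVec_self_star_mulVec (u v : n → 𝕜) :
    star v ⬝ᵥ (vecMulVec u (star u) *ᵥ v) = ((‖star v ⬝ᵥ u‖ ^ 2 : ℝ) : 𝕜) := by
  rw [vecMulVec_mulVec, op_smul_eq_smul, dotProduct_smul, smul_eq_mul, star_dotProduct u,
    RCLike.ofReal_pow, ← RCLike.conj_mul, RCLike.star_def]

theorem star_dotProduct_eq_zero_of_trace_mul_sum_vecMulVec_eq_zero {ι κ : Type*} [Fintype ι]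
    [Fintype κ] (x : ι → n → 𝕜) (y : κ → n → 𝕜)
    (h : ((∑ i, vecMulVec (x i) (star (x i))) * ∑ j, vecMulVec (y j) (star (y j))).trace = 0)
    (i : ι) (j : κ) : star (y j) ⬝ᵥ x i = 0 := by
  simp only [trace_mul_sum_vecMulVec_self_star, sum_mulVec, dotProduct_sum,
    star_dotProduct_vecMulVec_self_star_mulVec] at h
  norm_cast at h
  have hrows := (Fintype.sum_eq_zero_iff_of_nonneg fun j => by positivity).mp h
  have hentries := (Fintype.sum_eq_zero_iff_of_nonneg fun i => by positivity).mp (congrFun hrows j)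
  simpa using congrFun hentries i

end Matrix

theorem lie_algebra_iff_rank_one_general (n : ℕ)
    (A : Matrix (Fin n) (Fin n) ℂ →ₗ[ℝ] Matrix (Fin n) (Fin n) ℂ) :
    (∀ X Y : Matrix (Fin n) (Fin n) ℂ, X.PosSemidef → Y.PosSemidef →
        (X * Y).trace = 0 → ((A X) * Y).trace = 0) ↔
      ∀ u v : Fin n → ℂ, star v ⬝ᵥ u = 0 →
        star v ⬝ᵥ (A (vecMulVec u (star u)) *ᵥ v) = 0 := by
  constructor
  · intro h u v huv
    rw [← trace_mul_vecMulVec_self_star]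
    refine h _ _ (posSemidef_vecMulVec_self_star u) (posSemidef_vecMulVec_self_star v) ?_
    rw [trace_mul_vecMulVec_self_star, star_dotProduct_vecMulVec_self_star_mulVec, huv]
    simp
  · intro h X Y hX hY hXY
    obtain ⟨k, x, rfl⟩ := posSemidef_iff_eq_sum_vecMulVec.mp hX
    obtain ⟨l, y, rfl⟩ := posSemidef_iff_eq_sum_vecMulVec.mp hY
    have horth := star_dotProduct_eq_zero_of_trace_mul_sum_vecMulVec_eq_zero x y hXY
    simp only [map_sum, Finset.sum_mul, trace_sum, trace_mul_sum_vecMulVec_self_star]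
    exact Finset.sum_eq_zero fun i _ => Finset.sum_eq_zero fun j _ => h _ _ (horth i j)

/-- **Lie-algebra condition on rank-one matrices suffices.**
For a real-linear map `A` on the space of Hermitian `n × n` complex matrices (i.e. a real-linear
map on matrices sending Hermitian matrices to Hermitian matrices), one has
`⟨A X, Y⟩ = Tr((A X) Y) = 0` for all positive semidefinite `X, Y` with `⟨X, Y⟩ = Tr(X Y) = 0`
if and only if `v* A(u u*) v = 0` for all `u, v ∈ ℂⁿ` with `v* u = 0`. -/
theorem lie_algebra_iff_rank_one (n : ℕ) (hn : 0 < n)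
    (A : Matrix (Fin n) (Fin n) ℂ →ₗ[ℝ] Matrix (Fin n) (Fin n) ℂ)
    (hA : ∀ X : Matrix (Fin n) (Fin n) ℂ, X.IsHermitian → (A X).IsHermitian) :
    (∀ X Y : Matrix (Fin n) (Fin n) ℂ, X.PosSemidef → Y.PosSemidef →
        (X * Y).trace = 0 → ((A X) * Y).trace = 0) ↔
      ∀ u v : Fin n → ℂ, star v ⬝ᵥ u = 0 →
        star v ⬝ᵥ (A (vecMulVec u (star u)) *ᵥ v) = 0 :=
  lie_algebra_iff_rank_one_general n A
end

section
/- Let V be a finite-dimensional real inner product space and let C ⊆ V be a closed convex cone that is proper (C ∩ (−C) = {0}) and generating (C − C = V). Let A : V → V be a linear map. Then exp(tA) maps C into itself for every t ≥ 0 if and only if ⟨A u, v⟩ ≥ 0 for all u ∈ C and all v in the dual cone C* = {v ∈ V : ⟨w, v⟩ ≥ 0 for all w ∈ C} satisfying ⟨u, v⟩ = 0. -/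
/-!
Necessity: for `u ∈ C` and `v ∈ C*` with `⟪u, v⟫ = 0`, the function `t ↦ ⟪exp (t A) u, v⟫`
is nonnegative for `t ≥ 0` and vanishes at `0`, so its derivative `⟪A u, v⟫` at `0` is
nonnegative.

Sufficiency: let `x t = exp (t A) u` with `u ∈ C` and `f t = dist (x t, C) ^ 2`. If `c` is the
metric projection of `x t` onto `C`, then `x t - c ∈ -C*` and `⟪x t - c, c⟫ = 0`, so
cross-positivity applied to `c` gives `⟪A c, x t - c⟫ ≤ 0`; hence
`⟪A (x t), x t - c⟫ ≤ ‖A‖ ‖x t - c‖ ^ 2`, and the upper right Dini derivative of `f` is at most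
`2 ‖A‖ f`. Since `f 0 = 0`, Grönwall's inequality gives `f ≡ 0` on `[0, ∞)`, i.e. `x t ∈ C`.
-/

open scoped RealInnerProductSpace
open NormedSpace Metric Set Filter Topology

theorem HasDerivAt.nonneg_of_le_right {f : ℝ → ℝ} {f' a : ℝ} (hf : HasDerivAt f f' a)
    (hmin : ∀ t, a < t → f a ≤ f t) : 0 ≤ f' := by
  have hloc : IsLocalMinOn f (Ici a) a :=
    Filter.eventually_of_mem self_mem_nhdsWithin fun t (ht : a ≤ t) =>
      ht.eq_or_lt.elim (fun h => h ▸ le_rfl) (hmin t)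
  have hone : (1 : ℝ) ∈ posTangentConeAt (Ici a) a :=
    mem_posTangentConeAt_of_segment_subset <| by
      rw [segment_eq_Icc (by linarith)]; exact Icc_subset_Ici_self
  simpa using hloc.hasFDerivWithinAt_nonneg hf.hasFDerivAt.hasFDerivWithinAt hone

theorem HasDerivAt.frequently_slope_lt_of_le {f g : ℝ → ℝ} {g' s r : ℝ} (hg : HasDerivAt g g' s)
    (hfg : ∀ z, f z ≤ g z) (hs : f s = g s) (hr : g' < r) :
    ∃ᶠ z in 𝓝[>] s, (z - s)⁻¹ * (f z - f s) < r := by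
  have hslope : ∀ᶠ z in 𝓝[>] s, slope g s z < r :=
    ((hasDerivAt_iff_tendsto_slope.mp hg).mono_left (nhdsWithin_mono s fun z hz => ne_of_gt hz))
      |>.eventually (gt_mem_nhds hr)
  refine ((hslope.and self_mem_nhdsWithin).mono ?_).frequently
  rintro z ⟨hz, hsz : s < z⟩
  rw [slope_def_field, div_eq_inv_mul] at hz
  calc (z - s)⁻¹ * (f z - f s) ≤ (z - s)⁻¹ * (g z - g s) := by
        have := hfg z
        gcongr
        exact hs.ge
    _ < r := hz

theorem hasDerivAt_exp_smul_apply {V : Type*} [NormedAddCommGroup V] [NormedSpace ℝ V]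
    [CompleteSpace V] (A : V →L[ℝ] V) (u : V) (s : ℝ) :
    HasDerivAt (fun z : ℝ => exp (z • A) u) (A (exp (s • A) u)) s := by
  simpa using (hasDerivAt_exp_smul_const' A s).clm_apply (hasDerivAt_const s u)

section Cone

variable {V : Type*} [NormedAddCommGroup V] [InnerProductSpace ℝ V] {C : Set V}

theorem exists_cone_projection [CompleteSpace V] (hclosed : IsClosed C) (hconvex : Convex ℝ C)
    (hcone : ∀ a : ℝ, 0 < a → ∀ x ∈ C, a • x ∈ C) (hne : C.Nonempty) (p : V) :
    ∃ c ∈ C, ‖p - c‖ = infDist p C ∧ (∀ w ∈ C, ⟪p - c, w⟫ ≤ 0) ∧ ⟪p - c, c⟫ = 0 := by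
  obtain ⟨c, hc, hmin⟩ := exists_norm_eq_iInf_of_complete_convex hne hclosed.isComplete hconvex p
  have hvar := (norm_eq_iInf_iff_real_inner_le_zero hconvex hc).1 hmin
  have hle : ⟪p - c, c⟫ ≤ 0 := by
    simpa [two_smul] using hvar _ (hcone 2 two_pos c hc)
  have hge : 0 ≤ ⟪p - c, c⟫ := by
    have := hvar _ (hcone 2⁻¹ (by norm_num) c hc)
    rw [show (2⁻¹ : ℝ) • c - c = (-2⁻¹ : ℝ) • c by module, real_inner_smul_right] at this
    linarith
  have horth := le_antisymm hle hge
  refine ⟨c, hc, ?_, fun w hw => ?_, horth⟩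
  · simpa [infDist_eq_iInf, dist_eq_norm] using hmin
  · simpa [inner_sub_right, horth] using hvar w hw

def IsCrossPositive (C : Set V) (A : V →L[ℝ] V) : Prop :=
  ∀ u ∈ C, ∀ v : V, (∀ w ∈ C, 0 ≤ ⟪w, v⟫) → ⟪u, v⟫ = 0 → 0 ≤ ⟪A u, v⟫

theorem IsCrossPositive.inner_sub_le {A : V →L[ℝ] V} (hA : IsCrossPositive C A) {p c : V}
    (hc : c ∈ C) (hdual : ∀ w ∈ C, ⟪p - c, w⟫ ≤ 0) (horth : ⟪p - c, c⟫ = 0) :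
    ⟪A p, p - c⟫ ≤ ‖A‖ * ‖p - c‖ ^ 2 := by
  have hcross : ⟪A c, p - c⟫ ≤ 0 := by
    have := hA c hc (c - p) (fun w hw => by
      rw [← neg_sub p c, inner_neg_right, real_inner_comm]; linarith [hdual w hw])
      (by rw [← neg_sub, inner_neg_right, real_inner_comm, horth, neg_zero])
    rwa [← neg_sub, inner_neg_right, neg_nonneg] at this
  have hnorm : ⟪A (p - c), p - c⟫ ≤ ‖A‖ * ‖p - c‖ ^ 2 :=
    calc ⟪A (p - c), p - c⟫ ≤ ‖A (p - c)‖ * ‖p - c‖ := real_inner_le_norm _ _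
      _ ≤ ‖A‖ * ‖p - c‖ * ‖p - c‖ := by gcongr; exact A.le_opNorm _
      _ = ‖A‖ * ‖p - c‖ ^ 2 := by ring
  calc ⟪A p, p - c⟫ = ⟪A c, p - c⟫ + ⟪A (p - c), p - c⟫ := by
        rw [← inner_add_left, ← map_add, add_sub_cancel]
    _ ≤ ‖A‖ * ‖p - c‖ ^ 2 := by linarith

variable [CompleteSpace V]

/-- The lower right Dini derivative of `infDist (x ·) C ^ 2` at `s` is at most
`2 ‖A‖ infDist (x s) C ^ 2`. -/
theorem IsCrossPositive.frequently_slope_infDist_sq_lt {A : V →L[ℝ] V} (hA : IsCrossPositive C A)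
    (hclosed : IsClosed C) (hconvex : Convex ℝ C) (hcone : ∀ a : ℝ, 0 < a → ∀ x ∈ C, a • x ∈ C)
    (hne : C.Nonempty) {x : ℝ → V} {s r : ℝ} (hx : HasDerivAt x (A (x s)) s)
    (hr : 2 * ‖A‖ * infDist (x s) C ^ 2 < r) :
    ∃ᶠ z in 𝓝[>] s, (z - s)⁻¹ * (infDist (x z) C ^ 2 - infDist (x s) C ^ 2) < r := by
  obtain ⟨c, hc, hdist, hdual, horth⟩ := exists_cone_projection hclosed hconvex hcone hne (x s)
  -- `infDist (x ·) C ^ 2` is touched from above at `s` by `‖x · - c‖ ^ 2`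
  refine (hx.sub_const c).norm_sq.frequently_slope_lt_of_le
    (fun z => pow_le_pow_left₀ infDist_nonneg (dist_eq_norm (x z) c ▸ infDist_le_dist_of_mem hc) 2)
    (by rw [hdist]) ?_
  have := hA.inner_sub_le hc hdual horth
  rw [← hdist] at hr
  rw [real_inner_comm]
  linarith

theorem IsCrossPositive.mapsTo_exp {A : V →L[ℝ] V} (hA : IsCrossPositive C A)
    (hclosed : IsClosed C) (hconvex : Convex ℝ C) (hcone : ∀ a : ℝ, 0 < a → ∀ x ∈ C, a • x ∈ C)
    {t : ℝ} (ht : 0 ≤ t) : MapsTo (exp (t • A) : V →L[ℝ] V) C C := by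
  intro u hu
  set x : ℝ → V := fun s => exp (s • A) u
  have hx : ∀ s, HasDerivAt x (A (x s)) s := hasDerivAt_exp_smul_apply A u
  have hcont : Continuous fun s => infDist (x s) C ^ 2 :=
    ((continuous_infDist_pt C).comp
      (continuous_iff_continuousAt.2 fun s => (hx s).continuousAt)).pow 2
  have hx0 : infDist (x 0) C ^ 2 ≤ 0 := by simp [x, infDist_zero_of_mem hu]
  have hgronwall := le_gronwallBound_of_liminf_deriv_right_le hcont.continuousOn
    (fun s _ r hr => hA.frequently_slope_infDist_sq_lt hclosed hconvex hcone ⟨u, hu⟩ (hx s) hr)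
    hx0 (fun s _ => by rw [add_zero, mul_assoc]) t (right_mem_Icc.2 ht)
  rw [sub_zero, gronwallBound_ε0_δ0] at hgronwall
  refine (hclosed.mem_iff_infDist_zero ⟨u, hu⟩).2 ?_
  exact pow_eq_zero_iff two_ne_zero |>.1 (le_antisymm hgronwall (sq_nonneg _))

theorem isCrossPositive_of_mapsTo_exp {A : V →L[ℝ] V}
    (h : ∀ t : ℝ, 0 ≤ t → MapsTo (exp (t • A) : V →L[ℝ] V) C C) : IsCrossPositive C A := by
  intro u hu v hv huv
  have hd := (hasDerivAt_exp_smul_apply A u 0).inner ℝ (hasDerivAt_const (0 : ℝ) v)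
  simp only [zero_smul, exp_zero, one_apply_eq_self, inner_zero_right, zero_add] at hd
  refine hd.nonneg_of_le_right fun t ht => ?_
  simpa [huv] using hv _ (h t ht.le hu)

end Cone

theorem schneider_vidyasagar_general (V : Type*) [NormedAddCommGroup V] [InnerProductSpace ℝ V]
    [FiniteDimensional ℝ V] (C : Set V)
    (hclosed : IsClosed C) (hconvex : Convex ℝ C)
    (hcone : ∀ a : ℝ, 0 < a → ∀ x ∈ C, a • x ∈ C)
    (A : V →ₗ[ℝ] V) :
    (∀ t : ℝ, 0 ≤ t → ∀ x ∈ C, NormedSpace.exp (t • A.toContinuousLinearMap) x ∈ C) ↔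
      (∀ u ∈ C, ∀ v : V, (∀ w ∈ C, 0 ≤ ⟪w, v⟫) → ⟪u, v⟫ = 0 → 0 ≤ ⟪A u, v⟫) := by
  constructor
  · intro h
    exact isCrossPositive_of_mapsTo_exp fun t ht _ hx => h t ht _ hx
  · intro hA t ht
    exact IsCrossPositive.mapsTo_exp (A := A.toContinuousLinearMap) hA hclosed hconvex hcone ht

/-- **Schneider–Vidyasagar characterization of cross-positive maps.**
Let `V` be a finite-dimensional real inner product space and `C ⊆ V` a closed convex cone that
is proper (`C ∩ (-C) = {0}`) and generating (`C - C = V`), and let `A : V → V` be linear.  Then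
the operator exponential `exp(tA)` maps `C` into itself for every `t ≥ 0` if and only if
`⟨A u, v⟩ ≥ 0` for all `u ∈ C` and all `v` in the dual cone of `C` satisfying `⟨u, v⟩ = 0`. -/
theorem schneider_vidyasagar (V : Type*) [NormedAddCommGroup V] [InnerProductSpace ℝ V]
    [FiniteDimensional ℝ V] (C : Set V)
    (hclosed : IsClosed C) (hconvex : Convex ℝ C)
    (hcone : ∀ a : ℝ, 0 < a → ∀ x ∈ C, a • x ∈ C)
    (hproper : C ∩ (-C) = {0})
    (hgenerating : ∀ x : V, ∃ y ∈ C, ∃ z ∈ C, x = y - z)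
    (A : V →ₗ[ℝ] V) :
    (∀ t : ℝ, 0 ≤ t → ∀ x ∈ C, NormedSpace.exp (t • A.toContinuousLinearMap) x ∈ C) ↔
      (∀ u ∈ C, ∀ v : V, (∀ w ∈ C, 0 ≤ ⟪w, v⟫) → ⟪u, v⟫ = 0 → 0 ≤ ⟪A u, v⟫) :=
  schneider_vidyasagar_general V C hclosed hconvex hcone A
end
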